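/- arXiv:2408.14893 — 4 statements merged into one kernel-verified Lean document; each statement's English description precedes it below -/
import Mathlib

section
/- Let (A0,A1) be a quasi-Banach couple and let 0<p≤1 be such that both A0 and A1 are p-normed, i.e., ‖x+y‖_{A_i}^p ≤ ‖x‖_{A_i}^p + ‖y‖_{A_i}^p for i=0,1. Then either K(S(A0+A1),t,A0,A1) ≥ 1 for every t>0, or A0+A1 = A1 as sets. -/
open Filter Topology MeasureTheory ENNReal Set
open scoped Classical

noncomputable section

/-- A quasi-Banach space realized on a submodule of an ambient real vector space:
a quasi-norm (with quasi-triangle constant `qc`) which is complete on the carrier. -/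
structure QuasiNormedSpaceOn (V : Type*) [AddCommGroup V] [Module ℝ V] where
  carrier : Submodule ℝ V
  nrm : V → ℝ
  qc : ℝ
  one_le_qc : 1 ≤ qc
  nrm_nonneg : ∀ x : V, 0 ≤ nrm x
  nrm_eq_zero : ∀ x ∈ carrier, (nrm x = 0 ↔ x = 0)
  nrm_smul : ∀ (c : ℝ), ∀ x ∈ carrier, nrm (c • x) = |c| * nrm x
  quasi_triangle : ∀ x ∈ carrier, ∀ y ∈ carrier, nrm (x + y) ≤ qc * (nrm x + nrm y)
  complete : ∀ f : ℕ → V, (∀ k, f k ∈ carrier) →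
    (∀ ε : ℝ, 0 < ε → ∃ N : ℕ, ∀ m ≥ N, ∀ n ≥ N, nrm (f m - f n) < ε) →
    ∃ x ∈ carrier, Filter.Tendsto (fun k => nrm (f k - x)) Filter.atTop (nhds 0)

variable {V : Type*} [AddCommGroup V] [Module ℝ V]

/-- The sum `B0 + B1` of two subsets of the ambient space. -/
def sumSetG (B0 B1 : Set V) : Set V := {x | ∃ b0 ∈ B0, ∃ b1 ∈ B1, x = b0 + b1}

/-- Peetre's K-functional for a (generalized) couple given by sets `B0, B1`
with quasi-norms `N0, N1`. -/
def Kgen (B0 B1 : Set V) (N0 N1 : V → ℝ) (t : ℝ) (x : V) : ℝ :=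
  sInf {r : ℝ | ∃ b0 ∈ B0, ∃ b1 ∈ B1, x = b0 + b1 ∧ r = N0 b0 + t * N1 b1}

/-- Quasi-norm of the sum space. -/
def sumNormG (B0 B1 : Set V) (N0 N1 : V → ℝ) (x : V) : ℝ := Kgen B0 B1 N0 N1 1 x

/-- The set `A0 + A1` for a couple. -/
def csum (S0 S1 : QuasiNormedSpaceOn V) : Set V :=
  sumSetG (S0.carrier : Set V) (S1.carrier : Set V)

/-- Peetre's K-functional `K(x, t, A0, A1)` of a couple. -/
def Kfun (S0 S1 : QuasiNormedSpaceOn V) (t : ℝ) (x : V) : ℝ :=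
  Kgen (S0.carrier : Set V) (S1.carrier : Set V) S0.nrm S1.nrm t x

/-- The quasi-norm `‖x‖_{A0+A1} = K(x,1,A0,A1)`. -/
def sumNorm (S0 S1 : QuasiNormedSpaceOn V) (x : V) : ℝ := Kfun S0 S1 1 x

/-- The set `A0 ∩ A1`. -/
def cinter (S0 S1 : QuasiNormedSpaceOn V) : Set V :=
  (S0.carrier : Set V) ∩ (S1.carrier : Set V)

/-- The quasi-norm `‖x‖_{A0∩A1} = max(‖x‖_{A0}, ‖x‖_{A1})`. -/
def interNorm (S0 S1 : QuasiNormedSpaceOn V) (x : V) : ℝ := max (S0.nrm x) (S1.nrm x)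

/-- The unit sphere `S(A0+A1)`. -/
def sumSphere (S0 S1 : QuasiNormedSpaceOn V) : Set V :=
  {x | x ∈ csum S0 S1 ∧ sumNorm S0 S1 x = 1}

/-- `K(A, t, A0, A1) = sup_{a ∈ A} K(a, t, A0, A1)`. -/
def KSet (S0 S1 : QuasiNormedSpaceOn V) (t : ℝ) (A : Set V) : ℝ :=
  sSup (Kfun S0 S1 t '' A)

/-- `(A0, A1)` is a quasi-Banach couple: both spaces are continuously embedded
in the (Hausdorff topological vector space) ambient space `V`. -/
structure IsQBCouple {V : Type*} [AddCommGroup V] [Module ℝ V] [TopologicalSpace V]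
    [IsTopologicalAddGroup V] [ContinuousSMul ℝ V] [T2Space V]
    (S0 S1 : QuasiNormedSpaceOn V) : Prop where
  embed0 : ∀ f : ℕ → V, (∀ k, f k ∈ S0.carrier) →
    Filter.Tendsto (fun k => S0.nrm (f k)) Filter.atTop (nhds 0) →
    Filter.Tendsto f Filter.atTop (nhds (0 : V))
  embed1 : ∀ f : ℕ → V, (∀ k, f k ∈ S1.carrier) →
    Filter.Tendsto (fun k => S1.nrm (f k)) Filter.atTop (nhds 0) →
    Filter.Tendsto f Filter.atTop (nhds (0 : V))

/-- `A` is not closed in `B` with respect to the quasi-norm `NB`: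
some sequence in `A` converges (w.r.t. `NB`) to a point of `B` outside `A`. -/
def NotClosedIn (A B : Set V) (NB : V → ℝ) : Prop :=
  ∃ (f : ℕ → V) (x : V), (∀ k, f k ∈ A) ∧ x ∈ B ∧ x ∉ A ∧
    Filter.Tendsto (fun k => NB (f k - x)) Filter.atTop (nhds 0)

/-- Membership in the real interpolation space `(B0, B1)_{θ,p}` (generalized couple).
For `p = ∞` it is the boundedness of `t^{-θ} K(x,t)`; for finite `p` finiteness of
`∫_0^∞ (t^{-θ}K(x,t))^p dt/t`. -/
def interpMemG (B0 B1 : Set V) (N0 N1 : V → ℝ) (θ : ℝ) (p : ℝ≥0∞) (x : V) : Prop :=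
  x ∈ sumSetG B0 B1 ∧
    if p = ⊤ then ∃ M : ℝ, ∀ t : ℝ, 0 < t → t ^ (-θ) * Kgen B0 B1 N0 N1 t x ≤ M
    else (∫⁻ t in Set.Ioi (0:ℝ),
        ENNReal.ofReal ((t ^ (-θ) * Kgen B0 B1 N0 N1 t x) ^ p.toReal / t)) < ⊤

/-- The quasi-norm of the real interpolation space `(B0, B1)_{θ,p}`. -/
def interpNormG (B0 B1 : Set V) (N0 N1 : V → ℝ) (θ : ℝ) (p : ℝ≥0∞) (x : V) : ℝ :=
  if p = ⊤ then sSup {r : ℝ | ∃ t : ℝ, 0 < t ∧ r = t ^ (-θ) * Kgen B0 B1 N0 N1 t x}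
  else ((∫⁻ t in Set.Ioi (0:ℝ),
      ENNReal.ofReal ((t ^ (-θ) * Kgen B0 B1 N0 N1 t x) ^ p.toReal / t)) ^ (1 / p.toReal)).toReal

/-- The real interpolation space as a set (generalized couple). -/
def interpSetG (B0 B1 : Set V) (N0 N1 : V → ℝ) (θ : ℝ) (p : ℝ≥0∞) : Set V :=
  {x | interpMemG B0 B1 N0 N1 θ p x}

/-- The real interpolation space `(A0, A1)_{θ,p}` of a couple, as a set. -/
def interpSet (S0 S1 : QuasiNormedSpaceOn V) (θ : ℝ) (p : ℝ≥0∞) : Set V :=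
  interpSetG (S0.carrier : Set V) (S1.carrier : Set V) S0.nrm S1.nrm θ p

/-- The quasi-norm of `(A0, A1)_{θ,p}`. -/
def interpNorm (S0 S1 : QuasiNormedSpaceOn V) (θ : ℝ) (p : ℝ≥0∞) (x : V) : ℝ :=
  interpNormG (S0.carrier : Set V) (S1.carrier : Set V) S0.nrm S1.nrm θ p x

/-- A quasi-Banach lattice of real sequences indexed by `ℤ`. -/
structure SeqLattice where
  mem : (ℤ → ℝ) → Prop
  nrm : (ℤ → ℝ) → ℝ
  qc : ℝ
  one_le_qc : 1 ≤ qc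
  zero_mem : mem 0
  add_mem : ∀ f g, mem f → mem g → mem (f + g)
  smul_mem : ∀ (c : ℝ) (f), mem f → mem (c • f)
  nrm_nonneg : ∀ f, 0 ≤ nrm f
  nrm_eq_zero : ∀ f, mem f → (nrm f = 0 ↔ f = 0)
  nrm_smul : ∀ (c : ℝ) (f), mem f → nrm (c • f) = |c| * nrm f
  quasi_triangle : ∀ f g, mem f → mem g → nrm (f + g) ≤ qc * (nrm f + nrm g)
  latticeConst : ℝ
  latticeConst_pos : 0 < latticeConst
  lattice : ∀ f g, (∀ n : ℤ, |f n| ≤ |g n|) → mem g →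
    mem f ∧ nrm f ≤ latticeConst * nrm g
  complete : ∀ F : ℕ → (ℤ → ℝ), (∀ k, mem (F k)) →
    (∀ ε : ℝ, 0 < ε → ∃ N : ℕ, ∀ m ≥ N, ∀ n ≥ N, nrm (F m - F n) < ε) →
    ∃ f, mem f ∧ Filter.Tendsto (fun k => nrm (F k - f)) Filter.atTop (nhds 0)

/-- The sequence `(K(a, 2^n, A0, A1))_{n ∈ ℤ}`. -/
def Kseq (S0 S1 : QuasiNormedSpaceOn V) (a : V) : ℤ → ℝ :=
  fun n => Kfun S0 S1 ((2:ℝ) ^ n) a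

end

/-!
If `K(S(A0+A1), t) = γ₀ < 1` for some `t > 0`, then by homogeneity every `x ∈ A0 + A1` splits
as `x = a + u` with `‖a‖_{A0} + t‖u‖_{A1} ≤ γ‖x‖_{A0+A1}` for a fixed `γ ∈ (γ₀, 1)`. Iterating
the splitting on the `A0`-part gives `x = a_n + (u_0 + ⋯ + u_{n-1})` with `‖a_n‖_{A0} ≤ γⁿ‖x‖`
and `‖u_n‖_{A1} ≲ γⁿ`. Since `A1` is `p`-normed, the series `∑ u_n` converges in `A1`, and as
`a_n → 0` in `A0`, its sum is `x`; hence `x ∈ A1`.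
-/

section

variable {V : Type*} [AddCommGroup V] [Module ℝ V]

namespace QuasiNormedSpaceOn

variable (S : QuasiNormedSpaceOn V)

def IsPNormed (p : ℝ) : Prop :=
  ∀ x ∈ S.carrier, ∀ y ∈ S.carrier, S.nrm (x + y) ^ p ≤ S.nrm x ^ p + S.nrm y ^ p

lemma nrm_zero : S.nrm 0 = 0 := by
  simpa using S.nrm_smul 0 0 S.carrier.zero_mem

lemma nrm_sub_comm {x y : V} (hx : x ∈ S.carrier) (hy : y ∈ S.carrier) :
    S.nrm (x - y) = S.nrm (y - x) := by
  simpa using S.nrm_smul (-1) (y - x) (S.carrier.sub_mem hy hx)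

variable {S} {p : ℝ}

lemma IsPNormed.nrm_sum_rpow_le (hp : 0 < p) (hS : S.IsPNormed p) {u : ℕ → V}
    (hu : ∀ k, u k ∈ S.carrier) (s : Finset ℕ) :
    S.nrm (∑ k ∈ s, u k) ^ p ≤ ∑ k ∈ s, S.nrm (u k) ^ p := by
  induction s using Finset.cons_induction with
  | empty => simp [nrm_zero, Real.zero_rpow hp.ne']
  | cons a s ha ih =>
    rw [Finset.sum_cons, Finset.sum_cons]
    exact (hS _ (hu a) _ (S.carrier.sum_mem fun k _ => hu k)).trans (by linarith)

lemma IsPNormed.exists_tendsto_sum_range (hp : 0 < p) (hS : S.IsPNormed p) {u : ℕ → V}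
    (hu : ∀ k, u k ∈ S.carrier) (hsum : Summable fun k => S.nrm (u k) ^ p) :
    ∃ s ∈ S.carrier,
      Tendsto (fun n => S.nrm (∑ k ∈ Finset.range n, u k - s)) atTop (𝓝 0) := by
  have hmem : ∀ n, ∑ k ∈ Finset.range n, u k ∈ S.carrier :=
    fun n => S.carrier.sum_mem fun k _ => hu k
  have hnorm : ∀ n m, n ≤ m → S.nrm (∑ k ∈ Finset.range m, u k - ∑ k ∈ Finset.range n, u k) ^ p ≤
      ∑ k ∈ Finset.range m, S.nrm (u k) ^ p - ∑ k ∈ Finset.range n, S.nrm (u k) ^ p := by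
    intro n m hnm
    rw [← Finset.sum_Ico_eq_sub _ hnm, ← Finset.sum_Ico_eq_sub _ hnm]
    exact hS.nrm_sum_rpow_le hp hu _
  refine S.complete _ hmem fun ε hε => ?_
  obtain ⟨N, hN⟩ := Metric.cauchySeq_iff.1 hsum.hasSum.tendsto_sum_nat.cauchySeq (ε ^ p)
    (Real.rpow_pos_of_pos hε p)
  refine ⟨N, fun m hm n hn => ?_⟩
  have hsmall : ∀ m ≥ N, ∀ n ≥ N, n ≤ m → S.nrm (∑ k ∈ Finset.range m, u k -
      ∑ k ∈ Finset.range n, u k) < ε := by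
    intro m hm n hn hnm
    refine (Real.rpow_lt_rpow_iff (S.nrm_nonneg _) hε.le hp).1 ?_
    exact (hnorm n m hnm).trans_lt ((le_abs_self _).trans_lt (hN m hm n hn))
  rcases le_total n m with hnm | hmn
  · exact hsmall m hm n hn hnm
  · rw [S.nrm_sub_comm (hmem m) (hmem n)]
    exact hsmall n hn m hm hmn

end QuasiNormedSpaceOn

lemma summable_rpow_of_le_geometric {f : ℕ → ℝ} {C q p : ℝ} (hf : ∀ n, 0 ≤ f n)
    (hfC : ∀ n, f n ≤ C * q ^ n) (hq0 : 0 ≤ q) (hq1 : q < 1) (hp : 0 < p) :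
    Summable fun n => f n ^ p := by
  have hC : 0 ≤ C := by simpa using (hf 0).trans (hfC 0)
  refine Summable.of_nonneg_of_le (fun n => Real.rpow_nonneg (hf n) p) (fun n => ?_)
    ((summable_geometric_of_lt_one (Real.rpow_nonneg hq0 p)
      (Real.rpow_lt_one hq0 hq1 hp)).mul_left (C ^ p))
  calc f n ^ p ≤ (C * q ^ n) ^ p := Real.rpow_le_rpow (hf n) (hfC n) hp.le
    _ = C ^ p * (q ^ p) ^ n := by
      rw [Real.mul_rpow hC (pow_nonneg hq0 n), Real.rpow_pow_comm hq0]

variable {S0 S1 : QuasiNormedSpaceOn V}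

lemma mem_csum_of_mem_left {x : V} (hx : x ∈ S0.carrier) : x ∈ csum S0 S1 :=
  ⟨x, hx, 0, S1.carrier.zero_mem, (add_zero x).symm⟩

lemma mem_csum_of_mem_right {x : V} (hx : x ∈ S1.carrier) : x ∈ csum S0 S1 :=
  ⟨0, S0.carrier.zero_mem, x, hx, (zero_add x).symm⟩

lemma smul_mem_csum {x : V} (c : ℝ) (hx : x ∈ csum S0 S1) : c • x ∈ csum S0 S1 := by
  obtain ⟨b0, h0, b1, h1, rfl⟩ := hx
  exact ⟨c • b0, S0.carrier.smul_mem c h0, c • b1, S1.carrier.smul_mem c h1, smul_add c b0 b1⟩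

section KFunctional

variable {t : ℝ}

lemma Kfun_nonneg (ht : 0 ≤ t) (x : V) : 0 ≤ Kfun S0 S1 t x := by
  refine Real.sInf_nonneg ?_
  rintro _ ⟨b0, -, b1, -, -, rfl⟩
  have := mul_nonneg ht (S1.nrm_nonneg b1)
  linarith [S0.nrm_nonneg b0]

lemma Kfun_le (ht : 0 ≤ t) {x b0 b1 : V} (h0 : b0 ∈ S0.carrier) (h1 : b1 ∈ S1.carrier)
    (hx : x = b0 + b1) : Kfun S0 S1 t x ≤ S0.nrm b0 + t * S1.nrm b1 := by
  refine csInf_le ⟨0, ?_⟩ ⟨b0, h0, b1, h1, hx, rfl⟩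
  rintro _ ⟨c0, -, c1, -, -, rfl⟩
  have := mul_nonneg ht (S1.nrm_nonneg c1)
  linarith [S0.nrm_nonneg c0]

lemma sumNorm_le_nrm_left {a : V} (ha : a ∈ S0.carrier) : sumNorm S0 S1 a ≤ S0.nrm a := by
  have h := Kfun_le (S0 := S0) (S1 := S1) zero_le_one ha S1.carrier.zero_mem (add_zero a).symm
  rwa [S1.nrm_zero, mul_zero, add_zero] at h

lemma exists_lt_of_Kfun_lt {x : V} (hx : x ∈ csum S0 S1) {c : ℝ} (hc : Kfun S0 S1 t x < c) :
    ∃ b0 ∈ S0.carrier, ∃ b1 ∈ S1.carrier, x = b0 + b1 ∧ S0.nrm b0 + t * S1.nrm b1 < c := by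
  obtain ⟨a0, h0, a1, h1, hx⟩ := hx
  unfold Kfun Kgen at hc
  obtain ⟨_, ⟨b0, hb0, b1, hb1, hb, rfl⟩, hlt⟩ :=
    exists_lt_of_csInf_lt (by exact ⟨_, a0, h0, a1, h1, hx, rfl⟩) hc
  exact ⟨b0, hb0, b1, hb1, hb, hlt⟩

lemma le_mul_Kfun {x : V} (hx : x ∈ csum S0 S1) {M c : ℝ} (hM : 0 < M)
    (h : ∀ b0 ∈ S0.carrier, ∀ b1 ∈ S1.carrier, x = b0 + b1 →
      c ≤ M * (S0.nrm b0 + t * S1.nrm b1)) :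
    c ≤ M * Kfun S0 S1 t x := by
  obtain ⟨a0, h0, a1, h1, hx⟩ := hx
  rw [← div_le_iff₀' hM]
  refine le_csInf ⟨_, ⟨a0, h0, a1, h1, hx, rfl⟩⟩ ?_
  rintro _ ⟨b0, hb0, b1, hb1, hb, rfl⟩
  rw [div_le_iff₀' hM]
  exact h b0 hb0 b1 hb1 hb

lemma Kfun_smul_le (ht : 0 ≤ t) {x : V} (hx : x ∈ csum S0 S1) {c : ℝ} (hc : c ≠ 0) :
    Kfun S0 S1 t (c • x) ≤ |c| * Kfun S0 S1 t x := by
  refine le_mul_Kfun hx (abs_pos.2 hc) fun b0 h0 b1 h1 hb => ?_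
  calc Kfun S0 S1 t (c • x) ≤ S0.nrm (c • b0) + t * S1.nrm (c • b1) :=
        Kfun_le ht (S0.carrier.smul_mem c h0) (S1.carrier.smul_mem c h1) (by rw [hb, smul_add])
    _ = |c| * (S0.nrm b0 + t * S1.nrm b1) := by
        rw [S0.nrm_smul c b0 h0, S1.nrm_smul c b1 h1]; ring

lemma Kfun_smul (ht : 0 ≤ t) {x : V} (hx : x ∈ csum S0 S1) {c : ℝ} (hc : c ≠ 0) :
    Kfun S0 S1 t (c • x) = |c| * Kfun S0 S1 t x := by
  refine (Kfun_smul_le ht hx hc).antisymm ?_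
  have h := Kfun_smul_le ht (smul_mem_csum c hx) (inv_ne_zero hc)
  rwa [inv_smul_smul₀ hc, abs_inv, le_inv_mul_iff₀ (abs_pos.2 hc)] at h

lemma Kfun_le_max_mul_sumNorm (ht : 0 ≤ t) {x : V} (hx : x ∈ csum S0 S1) :
    Kfun S0 S1 t x ≤ max 1 t * sumNorm S0 S1 x := by
  refine le_mul_Kfun hx (zero_lt_one.trans_le (le_max_left 1 t)) fun b0 h0 b1 h1 hb => ?_
  have h0' := S0.nrm_nonneg b0
  have h1' := S1.nrm_nonneg b1
  have := Kfun_le ht h0 h1 hb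
  nlinarith [le_max_left 1 t, le_max_right 1 t]

lemma bddAbove_Kfun_image_sumSphere (ht : 0 ≤ t) :
    BddAbove (Kfun S0 S1 t '' sumSphere S0 S1) := by
  refine ⟨max 1 t, ?_⟩
  rintro _ ⟨y, ⟨hy, hy1⟩, rfl⟩
  simpa [hy1] using Kfun_le_max_mul_sumNorm ht hy

lemma KSet_nonneg (ht : 0 ≤ t) (A : Set V) : 0 ≤ KSet S0 S1 t A :=
  Real.sSup_nonneg (by rintro _ ⟨y, -, rfl⟩; exact Kfun_nonneg ht y)

lemma Kfun_le_KSet_mul_sumNorm (ht : 0 ≤ t) {v : V} (hv : v ∈ csum S0 S1) :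
    Kfun S0 S1 t v ≤ KSet S0 S1 t (sumSphere S0 S1) * sumNorm S0 S1 v := by
  obtain hr | hr := (show 0 ≤ sumNorm S0 S1 v from Kfun_nonneg zero_le_one v).eq_or_lt
  · simpa [← hr] using Kfun_le_max_mul_sumNorm ht hv
  set r := sumNorm S0 S1 v
  have hsph : r⁻¹ • v ∈ sumSphere S0 S1 := by
    refine ⟨smul_mem_csum _ hv, ?_⟩
    rw [sumNorm, Kfun_smul zero_le_one hv (inv_ne_zero hr.ne'), abs_inv, abs_of_pos hr]
    exact inv_mul_cancel₀ hr.ne'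
  have hle := le_csSup (bddAbove_Kfun_image_sumSphere ht) ⟨_, hsph, rfl⟩
  rw [Kfun_smul ht hv (inv_ne_zero hr.ne'), abs_inv, abs_of_pos hr, inv_mul_le_iff₀ hr] at hle
  rw [mul_comm]
  exact hle

end KFunctional

def HasSplitting (S0 S1 : QuasiNormedSpaceOn V) (t γ : ℝ) : Prop :=
  ∀ v ∈ csum S0 S1, ∃ a ∈ S0.carrier, ∃ u ∈ S1.carrier, v = a + u ∧
    S0.nrm a + t * S1.nrm u ≤ γ * sumNorm S0 S1 v

lemma HasSplitting.exists_seq {t γ : ℝ} (hsplit : HasSplitting S0 S1 t γ) (ht : 0 ≤ t)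
    (hγ : 0 ≤ γ) {x : V} (hx : x ∈ csum S0 S1) :
    ∃ a u : ℕ → V, a 0 = x ∧ ∀ n, a (n + 1) ∈ S0.carrier ∧ u n ∈ S1.carrier ∧
      a n = a (n + 1) + u n ∧
      S0.nrm (a (n + 1)) + t * S1.nrm (u n) ≤ γ ^ (n + 1) * sumNorm S0 S1 x := by
  choose! f hf g hg hfg hle using hsplit
  set a : ℕ → V := fun n => f^[n] x
  have ha_succ : ∀ n, a (n + 1) = f (a n) := fun n => Function.iterate_succ_apply' f n x
  have hmem : ∀ n, a n ∈ csum S0 S1 ∧ sumNorm S0 S1 (a n) ≤ γ ^ n * sumNorm S0 S1 x := by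
    intro n
    induction n with
    | zero => exact ⟨hx, by simp [a]⟩
    | succ n ih =>
      rw [ha_succ]
      refine ⟨mem_csum_of_mem_left (hf _ ih.1), (sumNorm_le_nrm_left (hf _ ih.1)).trans ?_⟩
      have := mul_nonneg ht (S1.nrm_nonneg (g (a n)))
      have := mul_le_mul_of_nonneg_left ih.2 hγ
      rw [pow_succ', mul_assoc]
      linarith [hle _ ih.1]
  refine ⟨a, fun n => g (a n), rfl, fun n => ?_⟩
  have hn := (hmem n).1
  rw [ha_succ]
  refine ⟨hf _ hn, hg _ hn, hfg _ hn, (hle _ hn).trans ?_⟩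
  rw [pow_succ', mul_assoc]
  exact mul_le_mul_of_nonneg_left (hmem n).2 hγ

section Couple

variable [TopologicalSpace V] [IsTopologicalAddGroup V] [ContinuousSMul ℝ V] [T2Space V]

lemma IsQBCouple.eq_zero_of_tendsto (h : IsQBCouple S0 S1) {x : V} {b0 b1 : ℕ → V}
    (hb0 : ∀ n, b0 n ∈ S0.carrier) (hb1 : ∀ n, b1 n ∈ S1.carrier) (hx : ∀ n, x = b0 n + b1 n)
    (h0 : Tendsto (fun n => S0.nrm (b0 n)) atTop (𝓝 0))
    (h1 : Tendsto (fun n => S1.nrm (b1 n)) atTop (𝓝 0)) :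
    x = 0 := by
  have := (h.embed0 _ hb0 h0).add (h.embed1 _ hb1 h1)
  simp only [← hx, add_zero] at this
  exact tendsto_const_nhds_iff.1 this

lemma IsQBCouple.eq_zero_of_sumNorm_eq_zero (h : IsQBCouple S0 S1) {x : V}
    (hx : x ∈ csum S0 S1) (hx0 : sumNorm S0 S1 x = 0) : x = 0 := by
  have hlt : ∀ n : ℕ, Kfun S0 S1 1 x < 1 / ((n : ℝ) + 1) := fun n => by
    show sumNorm S0 S1 x < _
    rw [hx0]; positivity
  choose b0 hb0 b1 hb1 hb hlt using fun n => exists_lt_of_Kfun_lt hx (hlt n)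
  refine h.eq_zero_of_tendsto hb0 hb1 hb ?_ ?_
  · refine squeeze_zero (fun n => S0.nrm_nonneg _) (fun n => ?_)
      tendsto_one_div_add_atTop_nhds_zero_nat
    linarith [hlt n, S1.nrm_nonneg (b1 n)]
  · refine squeeze_zero (fun n => S1.nrm_nonneg _) (fun n => ?_)
      tendsto_one_div_add_atTop_nhds_zero_nat
    linarith [hlt n, S0.nrm_nonneg (b0 n)]

lemma IsQBCouple.hasSplitting_of_KSet_lt (h : IsQBCouple S0 S1) {t γ : ℝ} (ht : 0 ≤ t)
    (hγ : KSet S0 S1 t (sumSphere S0 S1) < γ) : HasSplitting S0 S1 t γ := by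
  intro v hv
  obtain hr | hr := (show 0 ≤ sumNorm S0 S1 v from Kfun_nonneg zero_le_one v).eq_or_lt
  · refine ⟨0, S0.carrier.zero_mem, 0, S1.carrier.zero_mem, ?_, ?_⟩
    · simp [h.eq_zero_of_sumNorm_eq_zero hv hr.symm]
    · simp [S0.nrm_zero, S1.nrm_zero, ← hr]
  obtain ⟨a, ha, u, hu, hvau, hlt⟩ := exists_lt_of_Kfun_lt hv
    ((Kfun_le_KSet_mul_sumNorm ht hv).trans_lt ((mul_lt_mul_iff_left₀ hr).2 hγ))
  exact ⟨a, ha, u, hu, hvau, hlt.le⟩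

lemma HasSplitting.csum_subset {t γ : ℝ} (hsplit : HasSplitting S0 S1 t γ)
    (h : IsQBCouple S0 S1) {p : ℝ} (hp : 0 < p) (hS1 : S1.IsPNormed p) (ht : 0 < t)
    (hγ0 : 0 ≤ γ) (hγ1 : γ < 1) :
    csum S0 S1 ⊆ S1.carrier := by
  intro x hx
  obtain ⟨a, u, ha0, hau⟩ := hsplit.exists_seq ht.le hγ0 hx
  set r := sumNorm S0 S1 x
  have ha : ∀ n, S0.nrm (a (n + 1)) ≤ γ ^ (n + 1) * r := fun n => by
    linarith [(hau n).2.2.2, mul_nonneg ht.le (S1.nrm_nonneg (u n))]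
  have hu : ∀ n, S1.nrm (u n) ≤ γ * r / t * γ ^ n := fun n => by
    rw [div_mul_eq_mul_div, le_div_iff₀' ht]
    have : γ ^ (n + 1) * r = γ * r * γ ^ n := by ring
    linarith [(hau n).2.2.2, S0.nrm_nonneg (a (n + 1))]
  obtain ⟨s, hs, hlim⟩ := hS1.exists_tendsto_sum_range hp (fun n => (hau n).2.1)
    (summable_rpow_of_le_geometric (fun n => S1.nrm_nonneg _) hu hγ0 hγ1 hp)
  have hx_eq : ∀ n, x = a n + ∑ k ∈ Finset.range n, u k := by
    intro n
    induction n with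
    | zero => simp [ha0]
    | succ n ih => rw [ih, (hau n).2.2.1, Finset.sum_range_succ]; abel
  have hxs : x - s = 0 := by
    refine h.eq_zero_of_tendsto (b0 := fun n => a (n + 1))
      (b1 := fun n => ∑ k ∈ Finset.range (n + 1), u k - s) (fun n => (hau n).1)
      (fun n => S1.carrier.sub_mem (S1.carrier.sum_mem fun k _ => (hau k).2.1) hs)
      (fun n => by rw [hx_eq (n + 1)]; abel) ?_ (hlim.comp (tendsto_add_atTop_nat 1))
    refine squeeze_zero (fun n => S0.nrm_nonneg _) ha ?_
    simpa using ((tendsto_pow_atTop_nhds_zero_of_lt_one hγ0 hγ1).comp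
      (tendsto_add_atTop_nat 1)).mul_const r
  rwa [sub_eq_zero.1 hxs]

end Couple

end

theorem stmt0_general {V : Type*} [AddCommGroup V] [Module ℝ V] [TopologicalSpace V]
    [IsTopologicalAddGroup V] [ContinuousSMul ℝ V] [T2Space V]
    (S0 S1 : QuasiNormedSpaceOn V) (hcouple : IsQBCouple S0 S1)
    (p : ℝ) (hp0 : 0 < p)
    (hpnorm1 : ∀ x ∈ S1.carrier, ∀ y ∈ S1.carrier,
      S1.nrm (x + y) ^ p ≤ S1.nrm x ^ p + S1.nrm y ^ p) :
    (∀ t : ℝ, 0 < t → 1 ≤ KSet S0 S1 t (sumSphere S0 S1)) ∨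
      csum S0 S1 = (S1.carrier : Set V) := by
  refine or_iff_not_imp_left.2 fun hK => ?_
  push Not at hK
  obtain ⟨t, ht, hK1⟩ := hK
  obtain ⟨γ, hKγ, hγ1⟩ := exists_between hK1
  have hγ0 : 0 ≤ γ := (KSet_nonneg ht.le _).trans hKγ.le
  exact ((hcouple.hasSplitting_of_KSet_lt ht.le hKγ).csum_subset hcouple hp0 hpnorm1 ht hγ0
    hγ1).antisymm fun x hx => mem_csum_of_mem_right hx

/-- If `(A0,A1)` is a quasi-Banach couple and both `A0` and `A1` are
`p`-normed for some `0 < p ≤ 1`, then either `K(S(A0+A1), t, A0, A1) ≥ 1` for every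
`t > 0`, or `A0 + A1 = A1` as sets. -/
theorem stmt0 {V : Type*} [AddCommGroup V] [Module ℝ V] [TopologicalSpace V]
    [IsTopologicalAddGroup V] [ContinuousSMul ℝ V] [T2Space V]
    (S0 S1 : QuasiNormedSpaceOn V) (hcouple : IsQBCouple S0 S1)
    (p : ℝ) (hp0 : 0 < p) (hp1 : p ≤ 1)
    (hpnorm0 : ∀ x ∈ S0.carrier, ∀ y ∈ S0.carrier,
      S0.nrm (x + y) ^ p ≤ S0.nrm x ^ p + S0.nrm y ^ p)
    (hpnorm1 : ∀ x ∈ S1.carrier, ∀ y ∈ S1.carrier,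
      S1.nrm (x + y) ^ p ≤ S1.nrm x ^ p + S1.nrm y ^ p) :
    (∀ t : ℝ, 0 < t → 1 ≤ KSet S0 S1 t (sumSphere S0 S1)) ∨
      csum S0 S1 = (S1.carrier : Set V) :=
  stmt0_general S0 S1 hcouple p hp0 hpnorm1
end

section
/- Let (ε_n)_{n≥1} be a non-increasing sequence of non-negative real numbers converging to 0, and let (h(n))_{n≥1} be an increasing sequence of natural numbers satisfying n ≤ h(n) for all n. Then there exists a non-increasing sequence (ξ_n)_{n≥1} of non-negative real numbers converging to 0 such that ε_n ≤ ξ_n and ξ_n ≤ 2ξ_{h(n)} for all n. -/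
/-!
Cut ℕ into consecutive blocks `[N k, N (k + 1))` with `N (k + 1) = h (N k) + 1`, so that `h` maps
block `k` into blocks `≤ k + 1`. Make `ξ` constant on each block, with block values
`c (k + 1) = max (ε (N (k + 1))) (c k / 2)`: they dominate `ε`, decrease, tend to `0`, and drop by at
most a factor `2` from one block to the next, which gives `ξ n ≤ 2 ξ (h n)`.
-/

open Filter Topology

section HalvingMajorant

/-- The smallest sequence above `a` that never drops by more than a factor `2` in one step. -/
noncomputable def halvingMajorant (a : ℕ → ℝ) : ℕ → ℝ
  | 0 => a 0
  | k + 1 => max (a (k + 1)) (halvingMajorant a k / 2)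

variable {a : ℕ → ℝ}

theorem le_halvingMajorant (a : ℕ → ℝ) (k : ℕ) : a k ≤ halvingMajorant a k := by
  cases k with
  | zero => exact le_rfl
  | succ k => exact le_max_left _ _

theorem halvingMajorant_le_two_mul_succ (a : ℕ → ℝ) (k : ℕ) :
    halvingMajorant a k ≤ 2 * halvingMajorant a (k + 1) := by
  have := le_max_right (a (k + 1)) (halvingMajorant a k / 2)
  rw [← halvingMajorant] at this
  linarith

theorem halvingMajorant_nonneg (ha : ∀ k, 0 ≤ a k) (k : ℕ) : 0 ≤ halvingMajorant a k :=
  (ha k).trans (le_halvingMajorant a k)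

theorem antitone_halvingMajorant (ha : ∀ k, 0 ≤ a k) (ha' : Antitone a) :
    Antitone (halvingMajorant a) :=
  antitone_nat_of_succ_le fun k =>
    max_le ((ha' k.le_succ).trans (le_halvingMajorant a k))
      (by linarith [halvingMajorant_nonneg ha k])

/-- The limit `L` of the decreasing sequence satisfies `L = max 0 (L / 2)`, hence `L = 0`. -/
theorem tendsto_halvingMajorant_zero (ha : ∀ k, 0 ≤ a k) (ha' : Antitone a)
    (hlim : Tendsto a atTop (𝓝 0)) : Tendsto (halvingMajorant a) atTop (𝓝 0) := by
  set c := halvingMajorant a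
  have hc : Antitone c := antitone_halvingMajorant ha ha'
  obtain ⟨L, hL⟩ : ∃ L, Tendsto c atTop (𝓝 L) :=
    ⟨_, tendsto_atTop_ciInf hc ⟨0, fun _ ⟨k, hk⟩ => hk ▸ halvingMajorant_nonneg ha k⟩⟩
  have hL_nonneg : 0 ≤ L := ge_of_tendsto' hL (halvingMajorant_nonneg ha)
  have hrec : Tendsto (fun k => c (k + 1)) atTop (𝓝 (max 0 (L / 2))) :=
    ((hlim.comp (tendsto_add_atTop_nat 1)).max (hL.div_const 2) :)
  have hfix : L = max 0 (L / 2) :=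
    tendsto_nhds_unique (hL.comp (tendsto_add_atTop_nat 1)) hrec
  obtain rfl : L = 0 := by
    rcases max_choice 0 (L / 2) with h | h <;> rw [h] at hfix <;> linarith
  exact hL

end HalvingMajorant

section Blocks

def blockStart (h : ℕ → ℕ) : ℕ → ℕ
  | 0 => 0
  | k + 1 => h (blockStart h k) + 1

theorem strictMono_blockStart {h : ℕ → ℕ} (hh : ∀ n, n ≤ h n) : StrictMono (blockStart h) :=
  strictMono_nat_of_lt_succ fun _ => Nat.lt_succ_of_le (hh _)

theorem lt_blockStart_succ {h : ℕ → ℕ} (hmono : Monotone h) {n k : ℕ}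
    (hn : n ≤ blockStart h k) : h n < blockStart h (k + 1) :=
  Nat.lt_succ_of_le (hmono hn)

def blockIdx (N : ℕ → ℕ) (n : ℕ) : ℕ :=
  Nat.findGreatest (fun k => N k ≤ n) n

theorem gc_blockIdx {N : ℕ → ℕ} (hN : StrictMono N) (hN0 : N 0 = 0) :
    GaloisConnection N (blockIdx N) := by
  intro k n
  constructor
  · intro hk
    exact Nat.le_findGreatest (hN.le_apply.trans hk) hk
  · intro hk
    refine (hN.monotone hk).trans ?_
    exact Nat.findGreatest_spec (P := fun k => N k ≤ n) (Nat.zero_le n) (hN0.trans_le n.zero_le)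

end Blocks

/-- Given a non-increasing sequence `(ε_n)` of non-negative reals
converging to `0` and an increasing sequence `(h n)` of naturals with `n ≤ h n`,
there is a non-increasing sequence `(ξ_n)` of non-negative reals converging to `0`
with `ε_n ≤ ξ_n` and `ξ_n ≤ 2 ξ_{h n}` for all `n`. -/
theorem stmt14 (ε : ℕ → ℝ) (h : ℕ → ℕ)
    (hεnonneg : ∀ n, 0 ≤ ε n) (hεmono : ∀ n, ε (n + 1) ≤ ε n)
    (hεlim : Filter.Tendsto ε Filter.atTop (nhds 0))
    (hhmono : ∀ n, h n ≤ h (n + 1)) (hh : ∀ n, n ≤ h n) :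
    ∃ ξ : ℕ → ℝ, (∀ n, 0 ≤ ξ n) ∧ (∀ n, ξ (n + 1) ≤ ξ n) ∧
      Filter.Tendsto ξ Filter.atTop (nhds 0) ∧
      (∀ n, ε n ≤ ξ n) ∧ (∀ n, ξ n ≤ 2 * ξ (h n)) := by
  set N := blockStart h
  have hN : StrictMono N := strictMono_blockStart hh
  have gc : GaloisConnection N (blockIdx N) := gc_blockIdx hN rfl
  have ha : ∀ k, 0 ≤ (ε ∘ N) k := fun _ => hεnonneg _
  have hεanti : Antitone ε := antitone_nat_of_succ_le hεmono
  have ha' : Antitone (ε ∘ N) := hεanti.comp_monotone hN.monotone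
  set c := halvingMajorant (ε ∘ N)
  have hc : Antitone c := antitone_halvingMajorant ha ha'
  refine ⟨fun n => c (blockIdx N n), fun n => halvingMajorant_nonneg ha _,
    fun n => hc (gc.monotone_u n.le_succ), ?_, fun n => ?_, fun n => ?_⟩
  · have hidx : Tendsto (blockIdx N) atTop atTop :=
      tendsto_atTop_atTop.2 fun k => ⟨N k, fun n hn => (gc k n).1 hn⟩
    exact (tendsto_halvingMajorant_zero ha ha' (hεlim.comp hN.tendsto_atTop)).comp hidx
  · exact (hεanti (gc.l_u_le n)).trans (le_halvingMajorant (ε ∘ N) _)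
  · set k := blockIdx N n
    have hn : n < N (k + 1) := (lt_iff_lt_of_le_iff_le (gc _ _)).2 k.lt_succ_self
    have hhn : h n < N (k + 2) := lt_blockStart_succ (monotone_nat_of_le_succ hhmono) hn.le
    have hidx : blockIdx N (h n) ≤ k + 1 :=
      Nat.le_of_lt_succ ((lt_iff_lt_of_le_iff_le (gc _ _)).1 hhn)
    linarith [halvingMajorant_le_two_mul_succ (ε ∘ N) k, hc hidx]
end

section
/- Let X and Y be nonzero Banach spaces and let s = (s_n) be an s-numbers sequence. The following are equivalent: (a) there is a constant c>0 such that for every n ≥ 1, sup{s_n(T) : T ∈ L^A(X,Y), ‖T‖ = 1} > c; (b) for every non-increasing sequence (ε_n) of positive reals converging to 0, there exists an approximable operator T ∈ L^A(X,Y) such that (s_n(T)) is not O(ε_n), i.e., there is no constant C>0 with s_n(T) ≤ Cε_n for all n. -/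
open Filter Topology
open scoped ENNReal NNReal
open scoped Classical

noncomputable section

/-- An `s`-numbers sequence (s-numbers scale) in the sense of Pietsch: a rule
assigning to every bounded operator between Banach spaces a non-increasing sequence
of non-negative reals, starting at the operator norm, additive and multiplicative in
the index, normalized on the identities of the Euclidean spaces `ℓ²_n`, and vanishing
on operators of small rank. Here `s X Y T n` represents `s_{n+1}(T)`. -/
structure SNumberScale where
  s : ∀ (X Y : Type) [NormedAddCommGroup X] [NormedSpace ℝ X] [CompleteSpace X]
      [NormedAddCommGroup Y] [NormedSpace ℝ Y] [CompleteSpace Y],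
      (X →L[ℝ] Y) → ℕ → ℝ
  nonneg : ∀ (X Y : Type) [NormedAddCommGroup X] [NormedSpace ℝ X] [CompleteSpace X]
      [NormedAddCommGroup Y] [NormedSpace ℝ Y] [CompleteSpace Y]
      (T : X →L[ℝ] Y) (n : ℕ), 0 ≤ s X Y T n
  antitone : ∀ (X Y : Type) [NormedAddCommGroup X] [NormedSpace ℝ X] [CompleteSpace X]
      [NormedAddCommGroup Y] [NormedSpace ℝ Y] [CompleteSpace Y]
      (T : X →L[ℝ] Y) (n : ℕ), s X Y T (n + 1) ≤ s X Y T n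
  first_eq_norm : ∀ (X Y : Type) [NormedAddCommGroup X] [NormedSpace ℝ X]
      [CompleteSpace X] [NormedAddCommGroup Y] [NormedSpace ℝ Y] [CompleteSpace Y]
      (T : X →L[ℝ] Y), s X Y T 0 = ‖T‖
  add_le : ∀ (X Y : Type) [NormedAddCommGroup X] [NormedSpace ℝ X] [CompleteSpace X]
      [NormedAddCommGroup Y] [NormedSpace ℝ Y] [CompleteSpace Y]
      (S T : X →L[ℝ] Y) (n m : ℕ),
      s X Y (S + T) (n + m) ≤ s X Y S n + s X Y T m
  comp_le : ∀ (X Y Z : Type) [NormedAddCommGroup X] [NormedSpace ℝ X] [CompleteSpace X]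
      [NormedAddCommGroup Y] [NormedSpace ℝ Y] [CompleteSpace Y]
      [NormedAddCommGroup Z] [NormedSpace ℝ Z] [CompleteSpace Z]
      (S : X →L[ℝ] Y) (T : Y →L[ℝ] Z) (n m : ℕ),
      s X Z (T.comp S) (n + m) ≤ s Y Z T n * s X Y S m
  id_euclidean : ∀ n : ℕ,
      s (EuclideanSpace ℝ (Fin (n + 1))) (EuclideanSpace ℝ (Fin (n + 1)))
        (ContinuousLinearMap.id ℝ (EuclideanSpace ℝ (Fin (n + 1)))) n = 1
  rank_small : ∀ (X Y : Type) [NormedAddCommGroup X] [NormedSpace ℝ X] [CompleteSpace X]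
      [NormedAddCommGroup Y] [NormedSpace ℝ Y] [CompleteSpace Y]
      (T : X →L[ℝ] Y) (n : ℕ),
      Module.rank ℝ (LinearMap.range (T : X →ₗ[ℝ] Y)) < ((n : Cardinal) + 1) → s X Y T n = 0

variable {X Y : Type*} [NormedAddCommGroup X] [NormedSpace ℝ X]
  [NormedAddCommGroup Y] [NormedSpace ℝ Y]

/-- An approximable operator: a member of the operator-norm closure of the
finite-rank operators. -/
def IsApproximable (T : X →L[ℝ] Y) : Prop :=
  T ∈ closure {R : X →L[ℝ] Y | FiniteDimensional ℝ (LinearMap.range (R : X →ₗ[ℝ] Y))}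

/-- `X` admits, for each `n`, a `C`-complemented subspace `C`-isomorphic to `ℓ²_n`. -/
def UnifComplEuclidean (C : ℝ) (X : Type*) [NormedAddCommGroup X] [NormedSpace ℝ X] :
    Prop :=
  ∀ n : ℕ, ∃ P : X →L[ℝ] X, P.comp P = P ∧ ‖P‖ ≤ C ∧
    ∃ u : ↥(LinearMap.range (P : X →ₗ[ℝ] X)) ≃L[ℝ] EuclideanSpace ℝ (Fin (n + 1)),
      ‖(u : ↥(LinearMap.range (P : X →ₗ[ℝ] X)) →L[ℝ] EuclideanSpace ℝ (Fin (n + 1)))‖ ≤ C ∧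
      ‖(u.symm : EuclideanSpace ℝ (Fin (n + 1)) →L[ℝ] ↥(LinearMap.range (P : X →ₗ[ℝ] X)))‖ ≤ C

/-- Membership in `L^{(s)}_{p,q}(X,Y)` for an s-numbers scale `σ`. -/
def memLs (σ : SNumberScale) (p : ℝ) (q : ℝ≥0∞)
    (X Y : Type) [NormedAddCommGroup X] [NormedSpace ℝ X] [CompleteSpace X]
    [NormedAddCommGroup Y] [NormedSpace ℝ Y] [CompleteSpace Y]
    (T : X →L[ℝ] Y) : Prop :=
  if q = ⊤ then ∃ M : ℝ, ∀ n : ℕ, ((n : ℝ) + 1) ^ (1/p) * σ.s X Y T n ≤ M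
  else Summable (fun n : ℕ =>
    (((n : ℝ) + 1) ^ (1/p - 1/q.toReal) * σ.s X Y T n) ^ q.toReal)

end

/-!
(a) ⇒ (b): approximate the operators of (a) by finite-rank operators `Fₙ` with
`s_n(Fₙ) > c/2` and sum the lacunary series `T = ∑ tʲ F_{nⱼ}`. Taking
`nⱼ = mⱼ + rank (F_{n₀} + ⋯ + F_{nⱼ₋₁})` makes the earlier terms invisible to `s_{mⱼ}`
(additivity of `s` and its vanishing on operators of small rank), and a small ratio `t`
makes the later terms negligible, so `s_{mⱼ}(T) ≥ tʲ c/4`, while `mⱼ` is chosen with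
`j ε_{mⱼ} < tʲ c/4`.

(b) ⇒ (a): if (a) fails, the suprema `φₙ = sup {s_n(T) : T ∈ L^A, ‖T‖ = 1}` decrease to `0`,
and by homogeneity `s_n(T) ≤ ‖T‖ φₙ ≤ (‖T‖ + 1)(φₙ + 2⁻ⁿ)` for every approximable `T`, so (b)
fails for `εₙ = φₙ + 2⁻ⁿ`.
-/

theorem exists_seq_eq_add_sum_range (m f : ℕ → ℕ) :
    ∃ n : ℕ → ℕ, ∀ j, n j = m j + ∑ i ∈ Finset.range j, f (n i) := by
  let ρ : ℕ → ℕ := fun j => Nat.rec 0 (fun j r => r + f (m j + r)) j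
  refine ⟨fun j => m j + ρ j, fun j => ?_⟩
  induction j with
  | zero => rfl
  | succ j ih =>
    simp only [add_right_inj] at ih
    rw [Finset.sum_range_succ, ← ih]

theorem not_exists_forall_le_mul_of_forall_exists_lt {a ε : ℕ → ℝ} (hε : ∀ n, 0 ≤ ε n)
    (h : ∀ j : ℕ, ∃ m, j * ε m < a m) : ¬ ∃ C : ℝ, 0 < C ∧ ∀ n, a n ≤ C * ε n := by
  rintro ⟨C, -, hC⟩
  obtain ⟨m, hm⟩ := h ⌈C⌉₊
  have := mul_le_mul_of_nonneg_right (Nat.le_ceil C) (hε m)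
  linarith [hC m]

theorem exists_pos_antitone_tendsto_zero_ge {φ : ℕ → ℝ} (hφ : Antitone φ)
    (hφ_nonneg : ∀ n, 0 ≤ φ n) (hφ_lim : Tendsto φ atTop (𝓝 0)) :
    ∃ ε : ℕ → ℝ, (∀ n, 0 < ε n) ∧ Antitone ε ∧ Tendsto ε atTop (𝓝 0) ∧ φ ≤ ε := by
  refine ⟨fun n => φ n + (1 / 2) ^ n,
    fun n => add_pos_of_nonneg_of_pos (hφ_nonneg n) (by positivity), ?_, ?_, fun n => ?_⟩
  · exact hφ.add fun m n hmn => pow_le_pow_of_le_one (by norm_num) (by norm_num) hmn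
  · simpa using hφ_lim.add (tendsto_pow_atTop_nhds_zero_of_lt_one (r := (1 / 2 : ℝ))
      (by norm_num) (by norm_num))
  · simp only [le_add_iff_nonneg_right]
    positivity

section FiniteRank

variable (X Y : Type*) [NormedAddCommGroup X] [NormedSpace ℝ X]
  [NormedAddCommGroup Y] [NormedSpace ℝ Y]

def finiteRankSubmodule : Submodule ℝ (X →L[ℝ] Y) :=
  (LinearMap.finiteRange ℝ X Y).comap (ContinuousLinearMap.coeLM ℝ)

variable {X Y}

theorem mem_finiteRankSubmodule {R : X →L[ℝ] Y} :
    R ∈ finiteRankSubmodule X Y ↔ FiniteDimensional ℝ (LinearMap.range (R : X →ₗ[ℝ] Y)) :=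
  IsNoetherian.iff_fg

theorem isApproximable_iff_mem_topologicalClosure {T : X →L[ℝ] Y} :
    IsApproximable T ↔ T ∈ (finiteRankSubmodule X Y).topologicalClosure := by
  rw [← SetLike.mem_coe, Submodule.topologicalClosure_coe, IsApproximable]
  simp_rw [← mem_finiteRankSubmodule, SetLike.setOfPred_mem_eq]

theorem rank_sum_smul_le_sum_finrank {ι : Type*} (s : Finset ι) (a : ι → ℝ)
    (F : ι → X →L[ℝ] Y) (hF : ∀ i ∈ s, F i ∈ finiteRankSubmodule X Y) :
    LinearMap.rank ((∑ i ∈ s, a i • F i : X →L[ℝ] Y) : X →ₗ[ℝ] Y) ≤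
      ↑(∑ i ∈ s, Module.finrank ℝ (LinearMap.range (F i : X →ₗ[ℝ] Y))) := by
  rw [ContinuousLinearMap.toLinearMap_sum, Nat.cast_sum]
  refine (LinearMap.rank_finsetSum_le _ _).trans (Finset.sum_le_sum fun i hi => ?_)
  have := mem_finiteRankSubmodule.1 (hF i hi)
  rw [Module.finrank_eq_rank]
  exact Submodule.rank_mono (LinearMap.range_smul_le_range _ _)

end FiniteRank

namespace SNumberScale

variable (σ : SNumberScale) {X Y : Type} [NormedAddCommGroup X] [NormedSpace ℝ X]
  [CompleteSpace X] [NormedAddCommGroup Y] [NormedSpace ℝ Y] [CompleteSpace Y]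

theorem s_antitone (T : X →L[ℝ] Y) : Antitone (σ.s X Y T) :=
  antitone_nat_of_succ_le (σ.antitone X Y T)

theorem s_le_norm (T : X →L[ℝ] Y) (n : ℕ) : σ.s X Y T n ≤ ‖T‖ :=
  σ.first_eq_norm X Y T ▸ σ.s_antitone T n.zero_le

theorem s_le_add_norm_sub (S T : X →L[ℝ] Y) (n : ℕ) :
    σ.s X Y T n ≤ σ.s X Y S n + ‖T - S‖ := by
  simpa [σ.first_eq_norm] using σ.add_le X Y S (T - S) n 0

theorem s_smul_le (a : ℝ) (T : X →L[ℝ] Y) (n : ℕ) :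
    σ.s X Y (a • T) n ≤ |a| * σ.s X Y T n := by
  calc σ.s X Y (a • T) n = σ.s X Y ((a • ContinuousLinearMap.id ℝ Y).comp T) (0 + n) := by
        rw [ContinuousLinearMap.smul_comp, ContinuousLinearMap.id_comp, zero_add]
    _ ≤ ‖a • ContinuousLinearMap.id ℝ Y‖ * σ.s X Y T n := by
        rw [← σ.first_eq_norm]; exact σ.comp_le X Y Y T _ 0 n
    _ ≤ |a| * σ.s X Y T n := by
        gcongr
        · exact σ.nonneg X Y T n
        · rw [norm_smul, Real.norm_eq_abs]
          exact mul_le_of_le_one_right (abs_nonneg a) ContinuousLinearMap.norm_id_le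

theorem s_smul (a : ℝ) (T : X →L[ℝ] Y) (n : ℕ) :
    σ.s X Y (a • T) n = |a| * σ.s X Y T n := by
  refine (σ.s_smul_le a T n).antisymm ?_
  rcases eq_or_ne a 0 with rfl | ha
  · simpa using σ.nonneg X Y _ n
  calc |a| * σ.s X Y T n = |a| * σ.s X Y (a⁻¹ • a • T) n := by rw [inv_smul_smul₀ ha]
    _ ≤ |a| * (|a⁻¹| * σ.s X Y (a • T) n) := by gcongr; exact σ.s_smul_le _ _ n
    _ = σ.s X Y (a • T) n := by
        rw [abs_inv, ← mul_assoc, mul_inv_cancel₀ (abs_ne_zero.2 ha), one_mul]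

theorem s_eq_zero_of_rank_le {H : X →L[ℝ] Y} {r : ℕ}
    (hH : LinearMap.rank (H : X →ₗ[ℝ] Y) ≤ r) : σ.s X Y H r = 0 :=
  σ.rank_small X Y H r (hH.trans_lt (by exact_mod_cast r.lt_succ_self))

theorem s_add_sub_le_of_rank_le (T : X →L[ℝ] Y) {H : X →L[ℝ] Y} {r : ℕ}
    (hH : LinearMap.rank (H : X →ₗ[ℝ] Y) ≤ r) (m : ℕ) :
    σ.s X Y (T - H) (m + r) ≤ σ.s X Y T m := by
  have hH' : LinearMap.rank ((-H : X →L[ℝ] Y) : X →ₗ[ℝ] Y) ≤ r := by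
    rwa [ContinuousLinearMap.toLinearMap_neg, LinearMap.rank, LinearMap.range_neg]
  simpa [sub_eq_add_neg, σ.s_eq_zero_of_rank_le hH'] using σ.add_le X Y T (-H) m r

variable (X Y) in
noncomputable def approxSup (n : ℕ) : ℝ :=
  ⨆ T : {T : X →L[ℝ] Y // IsApproximable T ∧ ‖T‖ = 1}, σ.s X Y T n

theorem approxSup_nonneg (n : ℕ) : 0 ≤ σ.approxSup X Y n :=
  Real.iSup_nonneg fun T => σ.nonneg X Y T n

theorem s_le_approxSup {T : X →L[ℝ] Y} (hT : IsApproximable T) (hT_norm : ‖T‖ = 1) (n : ℕ) :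
    σ.s X Y T n ≤ σ.approxSup X Y n :=
  le_ciSup (f := fun T : {T : X →L[ℝ] Y // IsApproximable T ∧ ‖T‖ = 1} => σ.s X Y T n)
    ⟨1, Set.forall_mem_range.2 fun T => (σ.s_le_norm T.1 n).trans_eq T.2.2⟩ ⟨T, hT, hT_norm⟩

theorem approxSup_antitone : Antitone (σ.approxSup X Y) := fun m _ hmn =>
  Real.iSup_le (fun T => (σ.s_antitone T.1 hmn).trans (σ.s_le_approxSup T.2.1 T.2.2 _))
    (σ.approxSup_nonneg m)

theorem s_le_norm_mul_approxSup {T : X →L[ℝ] Y} (hT : IsApproximable T) (n : ℕ) :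
    σ.s X Y T n ≤ ‖T‖ * σ.approxSup X Y n := by
  rcases eq_or_ne T 0 with rfl | hT0
  · simpa using σ.s_smul_le 0 (0 : X →L[ℝ] Y) n
  have hT_norm : ‖T‖ ≠ 0 := norm_ne_zero_iff.2 hT0
  have hU : IsApproximable (‖T‖⁻¹ • T) := isApproximable_iff_mem_topologicalClosure.2 <|
    Submodule.smul_mem _ _ (isApproximable_iff_mem_topologicalClosure.1 hT)
  calc σ.s X Y T n = ‖T‖ * σ.s X Y (‖T‖⁻¹ • T) n := by
        rw [σ.s_smul, abs_inv, abs_norm, mul_inv_cancel_left₀ hT_norm]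
    _ ≤ ‖T‖ * σ.approxSup X Y n := by
        gcongr
        refine σ.s_le_approxSup hU ?_ n
        rw [norm_smul, norm_inv, norm_norm, inv_mul_cancel₀ hT_norm]

theorem tendsto_approxSup_zero
    (h : ∀ c, 0 < c → ∃ n, ∀ T : X →L[ℝ] Y, IsApproximable T → ‖T‖ = 1 → σ.s X Y T n ≤ c) :
    Tendsto (σ.approxSup X Y) atTop (𝓝 0) := by
  refine tendsto_order.2 ⟨fun a ha => .of_forall fun n => ha.trans_le (σ.approxSup_nonneg n),
    fun a ha => ?_⟩
  obtain ⟨n, hn⟩ := h (a / 2) (half_pos ha)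
  have hn' : σ.approxSup X Y n ≤ a / 2 :=
    Real.iSup_le (fun T => hn T T.2.1 T.2.2) (half_pos ha).le
  exact eventually_atTop.2 ⟨n, fun m hm => ((σ.approxSup_antitone hm).trans hn').trans_lt
    (half_lt_self ha)⟩

theorem s_sub_tsum_norm_tail_le_s_tsum (G : ℕ → X →L[ℝ] Y) (hG : Summable fun i => ‖G i‖)
    {j r : ℕ} (hr : LinearMap.rank ((∑ i ∈ Finset.range j, G i : X →L[ℝ] Y) : X →ₗ[ℝ] Y) ≤ r)
    (m : ℕ) :
    σ.s X Y (G j) (m + r) - ∑' k, ‖G (k + (j + 1))‖ ≤ σ.s X Y (∑' i, G i) m := by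
  have hsplit : ∑' i, G i - ∑ i ∈ Finset.range j, G i = G j + ∑' k, G (k + (j + 1)) := by
    rw [← hG.of_norm.sum_add_tsum_nat_add (j + 1), Finset.sum_range_succ]
    abel
  have hR : ‖∑' k, G (k + (j + 1))‖ ≤ ∑' k, ‖G (k + (j + 1))‖ :=
    norm_tsum_le_tsum_norm (hG.comp_injective (add_left_injective (j + 1)))
  have hpert := σ.s_le_add_norm_sub (∑' i, G i - ∑ i ∈ Finset.range j, G i) (G j) (m + r)
  have hrank := σ.s_add_sub_le_of_rank_le (∑' i, G i) hr m
  rw [hsplit, sub_add_cancel_left, norm_neg] at hpert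
  rw [hsplit] at hrank
  linarith

theorem mul_s_sub_le_s_tsum_geometric (F : ℕ → X →L[ℝ] Y) {M t : ℝ} (hF : ∀ i, ‖F i‖ ≤ M)
    (ht : 0 ≤ t) (ht_half : t ≤ 1 / 2) {j r : ℕ}
    (hr : LinearMap.rank ((∑ i ∈ Finset.range j, t ^ i • F i : X →L[ℝ] Y) : X →ₗ[ℝ] Y) ≤ r)
    (m : ℕ) :
    t ^ j * σ.s X Y (F j) (m + r) - 2 * M * t ^ (j + 1) ≤
      σ.s X Y (∑' i, t ^ i • F i) m := by
  have hM : 0 ≤ M := (norm_nonneg _).trans (hF 0)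
  have hG : ∀ i, ‖t ^ i • F i‖ ≤ M * t ^ i := fun i => by
    rw [norm_smul, norm_pow, Real.norm_of_nonneg ht, mul_comm]
    exact mul_le_mul_of_nonneg_right (hF i) (by positivity)
  have hgeom := summable_geometric_of_lt_one ht (by linarith)
  have hG_sum : Summable fun i => ‖t ^ i • F i‖ :=
    .of_nonneg_of_le (fun _ => norm_nonneg _) hG (hgeom.mul_left M)
  have htail : ∑' k, ‖t ^ (k + (j + 1)) • F (k + (j + 1))‖ ≤ 2 * M * t ^ (j + 1) := calc
    _ ≤ ∑' k, M * t ^ (j + 1) * t ^ k :=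
        (hG_sum.comp_injective (add_left_injective (j + 1))).tsum_le_tsum
          (fun k => (hG _).trans_eq (by ring)) (hgeom.mul_left _)
    _ = M * t ^ (j + 1) * (1 - t)⁻¹ := by
        rw [tsum_mul_left, tsum_geometric_of_lt_one ht (by linarith)]
    _ ≤ M * t ^ (j + 1) * 2 := by
        gcongr
        rw [inv_le_comm₀ (by linarith) two_pos]
        linarith
    _ = 2 * M * t ^ (j + 1) := by ring
  have := σ.s_sub_tsum_norm_tail_le_s_tsum _ hG_sum hr m
  rw [σ.s_smul, abs_of_nonneg (by positivity)] at this
  linarith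

theorem exists_finiteRank_norm_le_lt_s {c : ℝ} (hc : 0 < c)
    (h : ∀ n, ∃ T : X →L[ℝ] Y, IsApproximable T ∧ ‖T‖ = 1 ∧ c < σ.s X Y T n) (n : ℕ) :
    ∃ F ∈ finiteRankSubmodule X Y, ‖F‖ ≤ 1 + c / 2 ∧ c / 2 < σ.s X Y F n := by
  obtain ⟨T, hT, hT_norm, hT_s⟩ := h n
  obtain ⟨F, hF, hTF⟩ := Metric.mem_closure_iff.1 hT (c / 2) (half_pos hc)
  rw [dist_eq_norm] at hTF
  refine ⟨F, mem_finiteRankSubmodule.2 hF, ?_, ?_⟩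
  · linarith [norm_le_norm_add_norm_sub' F T, norm_sub_rev F T]
  · linarith [σ.s_le_add_norm_sub F T n, norm_sub_rev F T]

theorem exists_approximable_not_exists_le_mul {δ M : ℝ} (hδ : 0 < δ)
    (hF : ∀ n, ∃ F ∈ finiteRankSubmodule X Y, ‖F‖ ≤ M ∧ δ < σ.s X Y F n)
    (ε : ℕ → ℝ) (hε_pos : ∀ n, 0 < ε n) (hε : Tendsto ε atTop (𝓝 0)) :
    ∃ T : X →L[ℝ] Y, IsApproximable T ∧ ¬ ∃ C : ℝ, 0 < C ∧ ∀ n, σ.s X Y T n ≤ C * ε n := by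
  choose F hF_mem hF_norm hF_s using hF
  have hδM : δ < M := (hF_s 0).trans_le ((σ.s_le_norm _ 0).trans (hF_norm 0))
  have hM : 0 < M := hδ.trans hδM
  set t := δ / (4 * M) with ht_def
  have ht : 0 < t := by positivity
  have ht_half : t ≤ 1 / 2 := by
    rw [ht_def, div_le_iff₀ (by positivity)]
    linarith
  have hm : ∀ j : ℕ, ∃ m, j * ε m < t ^ j * δ / 2 := fun j => by
    have hpos : (j : ℝ) * 0 < t ^ j * δ / 2 := by rw [mul_zero]; positivity
    exact ((hε.const_mul (j : ℝ)).eventually (gt_mem_nhds hpos)).exists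
  choose m hm using hm
  obtain ⟨n, hn⟩ :=
    exists_seq_eq_add_sum_range m fun k => Module.finrank ℝ (LinearMap.range (F k : X →ₗ[ℝ] Y))
  refine ⟨∑' i, t ^ i • F (n i), ?_, ?_⟩
  · exact isApproximable_iff_mem_topologicalClosure.2 <|
      tsum_mem (Submodule.isClosed_topologicalClosure _) fun i =>
        Submodule.le_topologicalClosure _ (Submodule.smul_mem _ _ (hF_mem _))
  refine not_exists_forall_le_mul_of_forall_exists_lt (fun k => (hε_pos k).le)
    fun j => ⟨m j, (hm j).trans_le ?_⟩
  have hr := rank_sum_smul_le_sum_finrank (Finset.range j) (t ^ ·) (F ∘ n) fun i _ => hF_mem _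
  have hs := σ.mul_s_sub_le_s_tsum_geometric (F ∘ n) (fun i => hF_norm _) ht.le ht_half hr (m j)
  simp only [Function.comp_apply, ← hn j] at hs
  have ht_pow : 2 * M * t ^ (j + 1) = t ^ j * δ / 2 := by
    rw [pow_succ, ht_def]
    field_simp
    ring
  calc t ^ j * δ / 2 = t ^ j * δ - 2 * M * t ^ (j + 1) := by rw [ht_pow]; ring
    _ ≤ t ^ j * σ.s X Y (F (n j)) (n j) - 2 * M * t ^ (j + 1) := by gcongr; exact (hF_s _).le
    _ ≤ _ := hs

end SNumberScale

theorem stmt15_general (X Y : Type) [NormedAddCommGroup X] [NormedSpace ℝ X] [CompleteSpace X]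
    [NormedAddCommGroup Y] [NormedSpace ℝ Y] [CompleteSpace Y]
    (σ : SNumberScale) :
    (∃ c : ℝ, 0 < c ∧ ∀ n : ℕ, ∃ T : X →L[ℝ] Y,
      IsApproximable T ∧ ‖T‖ = 1 ∧ c < σ.s X Y T n) ↔
    (∀ ε : ℕ → ℝ, (∀ n, 0 < ε n) → (∀ n, ε (n + 1) ≤ ε n) →
      Filter.Tendsto ε Filter.atTop (nhds 0) →
      ∃ T : X →L[ℝ] Y, IsApproximable T ∧
        ¬ ∃ C : ℝ, 0 < C ∧ ∀ n : ℕ, σ.s X Y T n ≤ C * ε n) := by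
  constructor
  · rintro ⟨c, hc, ha⟩ ε hε_pos - hε
    exact σ.exists_approximable_not_exists_le_mul (half_pos hc)
      (σ.exists_finiteRank_norm_le_lt_s hc ha) ε hε_pos hε
  · contrapose!
    intro hsmall
    obtain ⟨ε, hε_pos, hε_anti, hε, hsup_le⟩ := exists_pos_antitone_tendsto_zero_ge
      σ.approxSup_antitone σ.approxSup_nonneg (σ.tendsto_approxSup_zero hsmall)
    refine ⟨ε, hε_pos, fun n => hε_anti n.le_succ, hε, fun T hT =>
      ⟨‖T‖ + 1, by positivity, fun n => ?_⟩⟩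
    calc σ.s X Y T n ≤ ‖T‖ * σ.approxSup X Y n := σ.s_le_norm_mul_approxSup hT n
      _ ≤ (‖T‖ + 1) * ε n :=
        mul_le_mul (by linarith) (hsup_le n) (σ.approxSup_nonneg n) (by positivity)

/-- Let `X, Y` be nonzero Banach spaces and `s` an s-numbers
sequence. The following are equivalent: (a) for some `c > 0` and every `n`,
`sup{s_n(T) : T ∈ L^A(X,Y), ‖T‖=1} > c`; (b) for every non-increasing positive null
sequence `(ε_n)` there is an approximable `T` with `s_n(T) ≠ O(ε_n)`. -/
theorem stmt15 (X Y : Type) [NormedAddCommGroup X] [NormedSpace ℝ X] [CompleteSpace X]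
    [NormedAddCommGroup Y] [NormedSpace ℝ Y] [CompleteSpace Y]
    [Nontrivial X] [Nontrivial Y] (σ : SNumberScale) :
    (∃ c : ℝ, 0 < c ∧ ∀ n : ℕ, ∃ T : X →L[ℝ] Y,
      IsApproximable T ∧ ‖T‖ = 1 ∧ c < σ.s X Y T n) ↔
    (∀ ε : ℕ → ℝ, (∀ n, 0 < ε n) → (∀ n, ε (n + 1) ≤ ε n) →
      Filter.Tendsto ε Filter.atTop (nhds 0) →
      ∃ T : X →L[ℝ] Y, IsApproximable T ∧
        ¬ ∃ C : ℝ, 0 < C ∧ ∀ n : ℕ, σ.s X Y T n ≤ C * ε n) :=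
  stmt15_general X Y σ
end

section
/- Let (A0,A1) be a quasi-Banach couple. Then there exist constants c, C > 0 such that for all x ∈ A0+A1 and all 0<t<1: c·(K(x,t,A0,A1) + t·K(x,1/t,A0,A1)) ≤ K(x,t,A0+A1,A0∩A1) ≤ C·(K(x,t,A0,A1) + t·K(x,1/t,A0,A1)), where K(x,t,A0+A1,A0∩A1) is the K-functional of the ordered couple formed by A0+A1 and A0∩A1. -/
open Filter Topology MeasureTheory ENNReal Set
open scoped Classical

/-!
Write `q` for the larger of the two quasi-triangle constants. Lower bound: given
`x = b0 + b1 + d` with `d ∈ A0 ∩ A1`, adding `d` to the `A1`-part bounds `K(x,t)` and adding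
it to the `A0`-part bounds `t K(x,1/t)`, whence `K(x,t) + t K(x,1/t) ≤ 2q (‖b0‖ + ‖b1‖ + t‖d‖)`.
Upper bound: two decompositions `x = a0 + a1 = a0' + a1'` give
`x = (a0 + a1') + (a1 - a1')` with `a1 - a1' = a0' - a0 ∈ A0 ∩ A1`, and since `t ≤ 1` this costs
at most `(1 + q) (‖a0‖ + t‖a1‖ + t‖a0'‖ + ‖a1'‖)`. Both estimates hold for arbitrary
decompositions, so they pass to the infima directly.
-/

namespace QuasiNormedSpaceOn

variable {V : Type*} [AddCommGroup V] [Module ℝ V] (S : QuasiNormedSpaceOn V)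

theorem nrm_neg {y : V} (hy : y ∈ S.carrier) : S.nrm (-y) = S.nrm y := by
  simpa using S.nrm_smul (-1) y hy

theorem nrm_add_le_of_le {q D : ℝ} (hq : S.qc ≤ q) {x y : V} (hx : x ∈ S.carrier)
    (hy : y ∈ S.carrier) (hyD : S.nrm y ≤ D) : S.nrm (x + y) ≤ q * (S.nrm x + D) :=
  (S.quasi_triangle x hx y hy).trans <|
    mul_le_mul hq (by linarith) (add_nonneg (S.nrm_nonneg x) (S.nrm_nonneg y))
      (zero_le_one.trans (S.one_le_qc.trans hq))

theorem nrm_sub_le_of_le {q : ℝ} (hq : S.qc ≤ q) {x y : V} (hx : x ∈ S.carrier)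
    (hy : y ∈ S.carrier) : S.nrm (x - y) ≤ q * (S.nrm x + S.nrm y) := by
  simpa [sub_eq_add_neg] using
    S.nrm_add_le_of_le hq hx (S.carrier.neg_mem hy) (S.nrm_neg hy).le

end QuasiNormedSpaceOn

section Kgen

variable {V : Type*} [AddCommGroup V] {B0 B1 : Set V} {N0 N1 : V → ℝ}

theorem Kgen_nonneg (hN0 : ∀ y, 0 ≤ N0 y) (hN1 : ∀ y, 0 ≤ N1 y) {t : ℝ} (ht : 0 ≤ t)
    (x : V) : 0 ≤ Kgen B0 B1 N0 N1 t x := by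
  apply Real.sInf_nonneg
  rintro r ⟨b0, -, b1, -, -, rfl⟩
  exact add_nonneg (hN0 b0) (mul_nonneg ht (hN1 b1))

theorem Kgen_le (hN0 : ∀ y, 0 ≤ N0 y) (hN1 : ∀ y, 0 ≤ N1 y) {t : ℝ} (ht : 0 ≤ t)
    {x b0 b1 : V} (hb0 : b0 ∈ B0) (hb1 : b1 ∈ B1) (hx : x = b0 + b1) :
    Kgen B0 B1 N0 N1 t x ≤ N0 b0 + t * N1 b1 := by
  refine csInf_le ⟨0, ?_⟩ ⟨b0, hb0, b1, hb1, hx, rfl⟩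
  rintro r ⟨c0, -, c1, -, -, rfl⟩
  exact add_nonneg (hN0 c0) (mul_nonneg ht (hN1 c1))

theorem le_Kgen {t m : ℝ} {x : V} (hx : x ∈ sumSetG B0 B1)
    (h : ∀ b0 ∈ B0, ∀ b1 ∈ B1, x = b0 + b1 → m ≤ N0 b0 + t * N1 b1) :
    m ≤ Kgen B0 B1 N0 N1 t x := by
  obtain ⟨b0, hb0, b1, hb1, hxb⟩ := hx
  refine le_csInf ⟨_, b0, hb0, b1, hb1, hxb, rfl⟩ ?_
  rintro r ⟨c0, hc0, c1, hc1, hxc, rfl⟩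
  exact h c0 hc0 c1 hc1 hxc

theorem le_mul_Kgen_add_mul_Kgen {t s u C m : ℝ} {x : V} (hx : x ∈ sumSetG B0 B1)
    (hu : 0 < u) (hC : 0 < C)
    (h : ∀ a0 ∈ B0, ∀ a1 ∈ B1, x = a0 + a1 → ∀ a0' ∈ B0, ∀ a1' ∈ B1, x = a0' + a1' →
      m ≤ C * (N0 a0 + t * N1 a1 + u * (N0 a0' + s * N1 a1'))) :
    m ≤ C * (Kgen B0 B1 N0 N1 t x + u * Kgen B0 B1 N0 N1 s x) := by
  rw [← div_le_iff₀' hC, ← sub_le_iff_le_add]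
  refine le_Kgen hx fun a0 ha0 a1 ha1 hxa => ?_
  rw [sub_le_iff_le_add', ← sub_le_iff_le_add, ← div_le_iff₀' hu]
  refine le_Kgen hx fun a0' ha0' a1' ha1' hxa' => ?_
  rw [div_le_iff₀' hu, sub_le_iff_le_add', div_le_iff₀' hC]
  exact h a0 ha0 a1 ha1 hxa a0' ha0' a1' ha1' hxa'

end Kgen

section Couple

variable {V : Type*} [AddCommGroup V] [Module ℝ V] (S0 S1 : QuasiNormedSpaceOn V)

theorem sumNorm_nonneg (x : V) : 0 ≤ sumNorm S0 S1 x :=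
  Kgen_nonneg S0.nrm_nonneg S1.nrm_nonneg zero_le_one x

theorem interNorm_nonneg (x : V) : 0 ≤ interNorm S0 S1 x :=
  le_max_of_le_left (S0.nrm_nonneg x)

theorem Kfun_add_mul_Kfun_inv_le {x b0 b1 d : V} (hb0 : b0 ∈ S0.carrier)
    (hb1 : b1 ∈ S1.carrier) (hd : d ∈ cinter S0 S1) (hx : x = b0 + b1 + d) {t : ℝ}
    (ht : 0 < t) (ht1 : t ≤ 1) :
    Kfun S0 S1 t x + t * Kfun S0 S1 (1 / t) x ≤
      2 * max S0.qc S1.qc * (S0.nrm b0 + S1.nrm b1 + t * interNorm S0 S1 d) := by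
  set q := max S0.qc S1.qc
  set D := interNorm S0 S1 d
  have hq : 1 ≤ q := S0.one_le_qc.trans (le_max_left _ _)
  have hKt : Kfun S0 S1 t x ≤ S0.nrm b0 + t * S1.nrm (b1 + d) :=
    Kgen_le S0.nrm_nonneg S1.nrm_nonneg ht.le hb0 (S1.carrier.add_mem hb1 hd.2)
      (by rw [hx, add_assoc])
  have hKt' : Kfun S0 S1 (1 / t) x ≤ S0.nrm (b0 + d) + 1 / t * S1.nrm b1 :=
    Kgen_le S0.nrm_nonneg S1.nrm_nonneg (by positivity) (S0.carrier.add_mem hb0 hd.1) hb1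
      (by rw [hx]; abel)
  have h1 : S1.nrm (b1 + d) ≤ q * (S1.nrm b1 + D) :=
    S1.nrm_add_le_of_le (le_max_right _ _) hb1 hd.2 (le_max_right _ _)
  have h0 : S0.nrm (b0 + d) ≤ q * (S0.nrm b0 + D) :=
    S0.nrm_add_le_of_le (le_max_left _ _) hb0 hd.1 (le_max_left _ _)
  have htq : t * q ≤ q := mul_le_of_le_one_left (by linarith) ht1
  have hN0 := S0.nrm_nonneg b0
  have hN1 := S1.nrm_nonneg b1
  calc Kfun S0 S1 t x + t * Kfun S0 S1 (1 / t) x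
      ≤ (S0.nrm b0 + t * (q * (S1.nrm b1 + D))) + (t * (q * (S0.nrm b0 + D)) + S1.nrm b1) := by
        have : t * (1 / t * S1.nrm b1) = S1.nrm b1 := by field_simp
        gcongr
        · exact hKt.trans (by gcongr)
        · calc t * Kfun S0 S1 (1 / t) x ≤ t * (S0.nrm (b0 + d) + 1 / t * S1.nrm b1) := by
                gcongr
            _ ≤ _ := by rw [mul_add, this]; gcongr
    _ ≤ 2 * q * (S0.nrm b0 + S1.nrm b1 + t * D) := by
        nlinarith [interNorm_nonneg S0 S1 d, mul_le_mul_of_nonneg_right htq (add_nonneg hN0 hN1)]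

theorem Kgen_sum_inter_le {x a0 a1 a0' a1' : V} (ha0 : a0 ∈ S0.carrier)
    (ha1 : a1 ∈ S1.carrier) (ha0' : a0' ∈ S0.carrier) (ha1' : a1' ∈ S1.carrier)
    (hx : x = a0 + a1) (hx' : x = a0' + a1') {t : ℝ} (ht : 0 ≤ t) (ht1 : t ≤ 1) :
    Kgen (csum S0 S1) (cinter S0 S1) (sumNorm S0 S1) (interNorm S0 S1) t x ≤
      (1 + max S0.qc S1.qc) *
        (S0.nrm a0 + t * S1.nrm a1 + (t * S0.nrm a0' + S1.nrm a1')) := by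
  set q := max S0.qc S1.qc
  set P := S0.nrm a0 + t * S1.nrm a1 + (t * S0.nrm a0' + S1.nrm a1')
  have hq : 0 ≤ q := zero_le_one.trans (S0.one_le_qc.trans (le_max_left _ _))
  have hN0 := S0.nrm_nonneg a0
  have hN1 := S1.nrm_nonneg a1
  have hN0' := S0.nrm_nonneg a0'
  have hN1' := S1.nrm_nonneg a1'
  have hd : a1 - a1' = a0' - a0 := by
    rw [sub_eq_sub_iff_add_eq_add, add_comm, ← hx, hx']
  have hS : sumNorm S0 S1 (a0 + a1') ≤ S0.nrm a0 + 1 * S1.nrm a1' :=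
    Kgen_le S0.nrm_nonneg S1.nrm_nonneg zero_le_one ha0 ha1' rfl
  have hI0 : t * S0.nrm (a1 - a1') ≤ q * P := by
    rw [hd]
    calc t * S0.nrm (a0' - a0) ≤ t * (q * (S0.nrm a0' + S0.nrm a0)) := by
          gcongr; exact S0.nrm_sub_le_of_le (le_max_left _ _) ha0' ha0
      _ ≤ q * P := by nlinarith [mul_nonneg hq hN0, mul_nonneg hq (mul_nonneg ht hN1)]
  have hI1 : t * S1.nrm (a1 - a1') ≤ q * P := by
    calc t * S1.nrm (a1 - a1') ≤ t * (q * (S1.nrm a1 + S1.nrm a1')) := by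
          gcongr; exact S1.nrm_sub_le_of_le (le_max_right _ _) ha1 ha1'
      _ ≤ q * P := by nlinarith [mul_nonneg hq hN1', mul_nonneg hq (mul_nonneg ht hN0')]
  have hI : t * interNorm S0 S1 (a1 - a1') ≤ q * P := by
    rw [interNorm, mul_max_of_nonneg _ _ ht]
    exact max_le hI0 hI1
  calc Kgen (csum S0 S1) (cinter S0 S1) (sumNorm S0 S1) (interNorm S0 S1) t x
      ≤ sumNorm S0 S1 (a0 + a1') + t * interNorm S0 S1 (a1 - a1') :=
        Kgen_le (sumNorm_nonneg S0 S1) (interNorm_nonneg S0 S1) ht ⟨a0, ha0, a1', ha1', rfl⟩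
          ⟨hd ▸ S0.carrier.sub_mem ha0' ha0, S1.carrier.sub_mem ha1 ha1'⟩ (by rw [hx]; abel)
    _ ≤ (1 + q) * P := by nlinarith [mul_nonneg ht hN1, mul_nonneg ht hN0']

end Couple

theorem stmt18_general {V : Type*} [AddCommGroup V] [Module ℝ V]
    (S0 S1 : QuasiNormedSpaceOn V) :
    ∃ c C : ℝ, 0 < c ∧ 0 < C ∧ ∀ x ∈ csum S0 S1, ∀ t : ℝ, 0 < t → t < 1 →
      c * (Kfun S0 S1 t x + t * Kfun S0 S1 (1/t) x) ≤
        Kgen (csum S0 S1) (cinter S0 S1) (sumNorm S0 S1) (interNorm S0 S1) t x ∧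
      Kgen (csum S0 S1) (cinter S0 S1) (sumNorm S0 S1) (interNorm S0 S1) t x ≤
        C * (Kfun S0 S1 t x + t * Kfun S0 S1 (1/t) x) := by
  set q := max S0.qc S1.qc
  have hq : 0 < q := zero_lt_one.trans_le (S0.one_le_qc.trans (le_max_left _ _))
  refine ⟨1 / (2 * q), 1 + q, by positivity, by positivity, fun x hx t ht ht1 => ⟨?_, ?_⟩⟩
  · refine le_Kgen ⟨x, hx, 0, ⟨zero_mem _, zero_mem _⟩, (add_zero x).symm⟩
      fun b hb d hd hxbd => ?_
    rw [← sub_le_iff_le_add]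
    refine le_Kgen hb fun b0 hb0 b1 hb1 hbb => ?_
    have hK := Kfun_add_mul_Kfun_inv_le S0 S1 hb0 hb1 hd (hbb ▸ hxbd) ht ht1.le
    rw [one_div_mul_eq_div]
    have := (div_le_iff₀' (by positivity)).2 hK
    linarith
  · refine le_mul_Kgen_add_mul_Kgen hx ht (by positivity)
      fun a0 ha0 a1 ha1 hxa a0' ha0' a1' ha1' hxa' => ?_
    have hinv : t * (S0.nrm a0' + 1 / t * S1.nrm a1') = t * S0.nrm a0' + S1.nrm a1' := by
      field_simp
    rw [hinv]
    exact Kgen_sum_inter_le S0 S1 ha0 ha1 ha0' ha1' hxa hxa' ht.le ht1.le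

/-- For any quasi-Banach couple `(A0,A1)` there are constants
`c, C > 0` with `c (K(x,t,A0,A1) + t K(x,1/t,A0,A1)) ≤ K(x,t,A0+A1,A0∩A1)
≤ C (K(x,t,A0,A1) + t K(x,1/t,A0,A1))` for all `x ∈ A0+A1` and `0<t<1`. -/
theorem stmt18 {V : Type*} [AddCommGroup V] [Module ℝ V] [TopologicalSpace V]
    [IsTopologicalAddGroup V] [ContinuousSMul ℝ V] [T2Space V]
    (S0 S1 : QuasiNormedSpaceOn V) (hcouple : IsQBCouple S0 S1) :
    ∃ c C : ℝ, 0 < c ∧ 0 < C ∧ ∀ x ∈ csum S0 S1, ∀ t : ℝ, 0 < t → t < 1 →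
      c * (Kfun S0 S1 t x + t * Kfun S0 S1 (1/t) x) ≤
        Kgen (csum S0 S1) (cinter S0 S1) (sumNorm S0 S1) (interNorm S0 S1) t x ∧
      Kgen (csum S0 S1) (cinter S0 S1) (sumNorm S0 S1) (interNorm S0 S1) t x ≤
        C * (Kfun S0 S1 t x + t * Kfun S0 S1 (1/t) x) :=
  stmt18_general S0 S1
end
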